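/- In a Nelson lattice, if a² = b² and (∼a)² = (∼b)² then a = b. -/

import Mathlib

/-- A Nelson (residuated) lattice: a bounded lattice with a commutative monoid
operation `mul` (unit `⊤`) residuated by `imp`, which is involutive
(`∼∼a = a` where `∼a = a ⇒ ⊥`) and satisfies the Nelson identity
`((a² ⇒ b) ⊓ ((∼b)² ⇒ ∼a)) ⇒ (a ⇒ b) = ⊤`. -/
structure NelsonStruct (A : Type*) [Lattice A] [BoundedOrder A] where
  mul : A → A → A
  imp : A → A → A
  mul_comm : ∀ a b, mul a b = mul b a
  mul_assoc : ∀ a b c, mul (mul a b) c = mul a (mul b c)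
  top_mul : ∀ a, mul ⊤ a = a
  res : ∀ a b c, mul a b ≤ c ↔ b ≤ imp a c
  involutive : ∀ a, imp (imp a ⊥) ⊥ = a
  nelson : ∀ a b,
    imp ((imp (mul a a) b) ⊓
         (imp (mul (imp b ⊥) (imp b ⊥)) (imp a ⊥))) (imp a b) = ⊤

namespace NelsonStruct

variable {A : Type*} [Lattice A] [BoundedOrder A] (N : NelsonStruct A)

/-- The square `a² = a * a`. -/
def sq (a : A) : A := N.mul a a

/-- The strong negation `∼a = a ⇒ ⊥`. -/
def sneg (a : A) : A := N.imp a ⊥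

end NelsonStruct

/-! Since `a² ≤ a`, the hypotheses give `a² ≤ b` and `(∼b)² ≤ ∼a`, so the Nelson identity
yields `a ≤ b`; by symmetry `b ≤ a`. -/

namespace NelsonStruct

variable {A : Type*} [Lattice A] [BoundedOrder A] (N : NelsonStruct A)

theorem le_iff_imp_eq_top {a b : A} : a ≤ b ↔ N.imp a b = ⊤ := by
  rw [← top_le_iff, ← N.res, N.mul_comm, N.top_mul]

theorem imp_top_left (c : A) : N.imp ⊤ c = c := by
  apply le_antisymm
  · simpa only [N.top_mul] using (N.res ⊤ (N.imp ⊤ c) c).mpr le_rfl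
  · exact (N.res ⊤ c c).mp (N.top_mul c).le

theorem sq_le (a : A) : N.sq a ≤ a :=
  (N.res a a a).mpr ((N.le_iff_imp_eq_top.mp le_rfl).symm ▸ le_top)

theorem le_of_sq_le_of_sq_sneg_le {a b : A} (hab : N.sq a ≤ b)
    (hba : N.sq (N.sneg b) ≤ N.sneg a) : a ≤ b := by
  have h : N.imp (N.imp (N.sq a) b ⊓ N.imp (N.sq (N.sneg b)) (N.sneg a)) (N.imp a b) = ⊤ :=
    N.nelson a b
  rw [N.le_iff_imp_eq_top.mp hab, N.le_iff_imp_eq_top.mp hba, inf_idem, N.imp_top_left] at h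
  exact N.le_iff_imp_eq_top.mpr h

end NelsonStruct

/-- In a Nelson lattice, if `a² = b²` and `(∼a)² = (∼b)²`
then `a = b`. -/
theorem NelsonStruct.eq_of_sq_eq {A : Type*} [Lattice A] [BoundedOrder A]
    (N : NelsonStruct A) (a b : A)
    (h1 : N.sq a = N.sq b) (h2 : N.sq (N.sneg a) = N.sq (N.sneg b)) :
    a = b :=
  le_antisymm
    (N.le_of_sq_le_of_sq_sneg_le (h1 ▸ N.sq_le b) (h2 ▸ N.sq_le (N.sneg a)))
    (N.le_of_sq_le_of_sq_sneg_le (h1 ▸ N.sq_le a) (h2 ▸ N.sq_le (N.sneg b)))
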